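/- arXiv:2505.09000 — 3 statements merged into one kernel-verified Lean document; each statement's English description precedes it below -/
import Mathlib

section
/- For every ω-regular language A ⊆ 𝒜^ω there exists a closed guarded RLL expression e with A = L(e). -/
/-!
State elimination on a DFA, carried out with a continuation. Write `L_S(p, q)` for the nonempty
words leading from `p` to `q` with all intermediate states in `S`. By induction on `S` one builds
guarded expressions denoting `L_S(p, q) · L(K)` for any continuation `K`: splitting paths at
their first intermediate visit to a new state `s` gives
`L_{S+s}(p, q) = L_S(p, q) + L_S(p, s) · L_S(s, s)∗ · L_S(s, q)`, and `L_S(s, s)∗ · L_S(s, q) · L(K)`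
is the least fixed point of `X ↦ L_S(s, q) · L(K) ∪ L_S(s, s) · X`, i.e. a `μ`. Every letter is
read through a prefix `a·`, so all variables are guarded. When `ε ∉ C`, `C^ω` is the greatest fixed
point of `X ↦ C · X`, i.e. a `ν` whose body is the expression for `C · X`; plugging it in as the
continuation of the expression for `B` gives `B · C^ω`, and a finite union is a finite sum.
-/

namespace RLL

/-- Right-linear lattice (RLL) expressions over alphabet `𝒜`, with de Bruijn variables. -/
inductive Expr (𝒜 : Type) : Type
  | var : ℕ → Expr 𝒜
  | letter : 𝒜 → Expr 𝒜 → Expr 𝒜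
  | zero : Expr 𝒜
  | plus : Expr 𝒜 → Expr 𝒜 → Expr 𝒜
  | top : Expr 𝒜
  | inter : Expr 𝒜 → Expr 𝒜 → Expr 𝒜
  | mu : Expr 𝒜 → Expr 𝒜
  | nu : Expr 𝒜 → Expr 𝒜
  deriving DecidableEq

namespace Expr

variable {𝒜 : Type}

/-- Renaming of de Bruijn variables. -/
def rename (f : ℕ → ℕ) : Expr 𝒜 → Expr 𝒜
  | var n => var (f n)
  | letter a e => letter a (rename f e)
  | zero => zero
  | plus e g => plus (rename f e) (rename f g)
  | top => top
  | inter e g => inter (rename f e) (rename f g)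
  | mu e => mu (rename (fun n => match n with | 0 => 0 | m + 1 => f m + 1) e)
  | nu e => nu (rename (fun n => match n with | 0 => 0 | m + 1 => f m + 1) e)

/-- Simultaneous substitution. -/
def subst (σ : ℕ → Expr 𝒜) : Expr 𝒜 → Expr 𝒜
  | var n => σ n
  | letter a e => letter a (subst σ e)
  | zero => zero
  | plus e g => plus (subst σ e) (subst σ g)
  | top => top
  | inter e g => inter (subst σ e) (subst σ g)
  | mu e => mu (subst (fun n => match n with | 0 => var 0 | m + 1 => rename Nat.succ (σ m)) e)
  | nu e => nu (subst (fun n => match n with | 0 => var 0 | m + 1 => rename Nat.succ (σ m)) e)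

/-- Substitute `f` for the variable with de Bruijn index `0` (used for unfolding
fixed points: `σX e(X) ↦ e(σX e(X))`). -/
def subst0 (f : Expr 𝒜) (e : Expr 𝒜) : Expr 𝒜 :=
  subst (fun n => match n with | 0 => f | m + 1 => var m) e

/-- All free variables of `e` are `< n`. -/
def ClosedUnder : Expr 𝒜 → ℕ → Prop
  | var m, n => m < n
  | letter _ e, n => ClosedUnder e n
  | zero, _ => True
  | plus e f, n => ClosedUnder e n ∧ ClosedUnder f n
  | top, _ => True
  | inter e f, n => ClosedUnder e n ∧ ClosedUnder f n
  | mu e, n => ClosedUnder e (n + 1)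
  | nu e, n => ClosedUnder e (n + 1)

/-- `e` has no free variables. -/
def Closed (e : Expr 𝒜) : Prop := ClosedUnder e 0

/-- `GuardedIn e U` : no variable of `U` occurs in `e` outside the scope of a letter `a·`,
and every variable bound in `e` is separated from its binder by a letter.  -/
def GuardedIn : Expr 𝒜 → Set ℕ → Prop
  | var n, U => n ∉ U
  | letter _ e, _ => GuardedIn e ∅
  | zero, _ => True
  | plus e f, U => GuardedIn e U ∧ GuardedIn f U
  | top, _ => True
  | inter e f, U => GuardedIn e U ∧ GuardedIn f U
  | mu e, U => GuardedIn e (insert 0 ((· + 1) '' U))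
  | nu e, U => GuardedIn e (insert 0 ((· + 1) '' U))

/-- A (closed) expression is guarded if each of its variable occurrences occurs free
in a subexpression of the form `a·f`. -/
def Guarded (e : Expr 𝒜) : Prop := GuardedIn e ∅

/-- The size of an expression. -/
def size : Expr 𝒜 → ℕ
  | var _ => 1
  | letter _ e => size e + 1
  | zero => 1
  | plus e f => size e + size f + 1
  | top => 1
  | inter e f => size e + size f + 1
  | mu e => size e + 1
  | nu e => size e + 1

end Expr

/-- ω-words over `𝒜`. -/
abbrev Word (𝒜 : Type) := ℕ → 𝒜

/-- ω-languages over `𝒜`. -/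
abbrev OLang (𝒜 : Type) := Set (Word 𝒜)

variable {𝒜 : Type}

/-- The tail of an ω-word. -/
def wtail (w : Word 𝒜) : Word 𝒜 := fun n => w (n + 1)

/-- Prepend a letter to an ω-word. -/
def wcons (a : 𝒜) (w : Word 𝒜) : Word 𝒜 := fun n => match n with | 0 => a | m + 1 => w m

/-- Extend an environment (interpretation of de Bruijn variables) by a language for
variable `0`. -/
def consEnv (A : OLang 𝒜) (ρ : ℕ → OLang 𝒜) : ℕ → OLang 𝒜 :=
  fun n => match n with | 0 => A | m + 1 => ρ m

/-- The language semantics of RLL expressions, relative to an environment interpreting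
free variables (this corresponds to admitting languages as constants).  `μ` and `ν` are
interpreted via the Knaster–Tarski characterisation of least and greatest fixed points. -/
def lang (ρ : ℕ → OLang 𝒜) : Expr 𝒜 → OLang 𝒜
  | Expr.var n => ρ n
  | Expr.letter a e => {w | w 0 = a ∧ wtail w ∈ lang ρ e}
  | Expr.zero => ∅
  | Expr.plus e f => lang ρ e ∪ lang ρ f
  | Expr.top => Set.univ
  | Expr.inter e f => lang ρ e ∩ lang ρ f
  | Expr.mu e => ⋂₀ {A : OLang 𝒜 | lang (consEnv A ρ) e ⊆ A}
  | Expr.nu e => ⋃₀ {A : OLang 𝒜 | A ⊆ lang (consEnv A ρ) e}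

/-- The language of a (closed) expression. -/
def Lang0 (e : Expr 𝒜) : OLang 𝒜 := lang (fun _ => ∅) e

/-- The Fischer–Ladner relation `→_FL`. -/
inductive FLStep : Expr 𝒜 → Expr 𝒜 → Prop
  | letter (a : 𝒜) (e : Expr 𝒜) : FLStep (Expr.letter a e) e
  | plusL (e f : Expr 𝒜) : FLStep (Expr.plus e f) e
  | plusR (e f : Expr 𝒜) : FLStep (Expr.plus e f) f
  | interL (e f : Expr 𝒜) : FLStep (Expr.inter e f) e
  | interR (e f : Expr 𝒜) : FLStep (Expr.inter e f) f
  | mu (e : Expr 𝒜) : FLStep (Expr.mu e) (Expr.subst0 (Expr.mu e) e)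
  | nu (e : Expr 𝒜) : FLStep (Expr.nu e) (Expr.subst0 (Expr.nu e) e)

/-- `f ≤_FL e` : the reflexive-transitive closure of `→_FL`. -/
def FLle (f e : Expr 𝒜) : Prop := Relation.ReflTransGen FLStep e f

/-- The Fischer–Ladner closure of `e`. -/
def FL (e : Expr 𝒜) : Set (Expr 𝒜) := {f | FLle f e}

/-- `f <_FL e`. -/
def FLlt (f e : Expr 𝒜) : Prop := FLle f e ∧ ¬ FLle e f

/-- Immediate (strict) subformula relation: `SubStep e f` iff `e` is an immediate
subexpression of `f`. -/
inductive SubStep : Expr 𝒜 → Expr 𝒜 → Prop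
  | letter (a : 𝒜) (e : Expr 𝒜) : SubStep e (Expr.letter a e)
  | plusL (e f : Expr 𝒜) : SubStep e (Expr.plus e f)
  | plusR (e f : Expr 𝒜) : SubStep f (Expr.plus e f)
  | interL (e f : Expr 𝒜) : SubStep e (Expr.inter e f)
  | interR (e f : Expr 𝒜) : SubStep f (Expr.inter e f)
  | mu (e : Expr 𝒜) : SubStep e (Expr.mu e)
  | nu (e : Expr 𝒜) : SubStep e (Expr.nu e)

/-- The subformula order `e ⊑ f`. -/
def Subformula (e f : Expr 𝒜) : Prop := Relation.ReflTransGen SubStep e f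

/-- `e` is a `μ`-formula. -/
def IsMu (e : Expr 𝒜) : Prop := ∃ f, e = Expr.mu f

/-- `e` is a `ν`-formula. -/
def IsNu (e : Expr 𝒜) : Prop := ∃ f, e = Expr.nu f

/-- `x` occurs infinitely often in the sequence `t`. -/
def InfOcc {α : Type*} (t : ℕ → α) (x : α) : Prop := ∀ N, ∃ n, N ≤ n ∧ t n = x

end RLL
namespace RLL

variable {𝒜 : Type}

/-- The finite segment `w[i..j)` of an ω-word. -/
def segment (w : Word 𝒜) (i j : ℕ) : List 𝒜 := (List.range (j - i)).map fun k => w (i + k)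

/-- `w ∈ B · C^ω` : `w` decomposes as a word of `B` followed by infinitely many
(nonempty) words of `C`. -/
def MemOmegaProd (B C : Language 𝒜) (w : Word 𝒜) : Prop :=
  ∃ idx : ℕ → ℕ, (∀ k, idx k < idx (k + 1)) ∧ segment w 0 (idx 0) ∈ B ∧
    ∀ k, segment w (idx k) (idx (k + 1)) ∈ C

/-- A language of ω-words is ω-regular if it is a finite union `⋃_{i<n} B_i C_i^ω` with
`B_i, C_i` regular languages of finite words and `ε ∉ C_i`. -/
def IsOmegaRegular (L : OLang 𝒜) : Prop :=
  ∃ (n : ℕ) (B C : Fin n → Language 𝒜),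
    (∀ i, (B i).IsRegular) ∧ (∀ i, (C i).IsRegular) ∧ (∀ i, [] ∉ C i) ∧
    L = {w | ∃ i, MemOmegaProd (B i) (C i) w}

end RLL
namespace RLL

open Computability

variable {𝒜 : Type}

section Words

open Stream'

theorem segment_eq_take_drop (w : Stream' 𝒜) (i j : ℕ) :
    segment w i j = (w.drop i).take (j - i) := by
  apply List.ext_getElem (by simp [segment])
  intro k _ _
  simp only [segment, List.getElem_map, List.getElem_range, take_get, get_drop]
  rfl

theorem segment_append_drop (w : Stream' 𝒜) {i j : ℕ} (hij : i ≤ j) :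
    segment w i j ++ₛ w.drop j = w.drop i := by
  obtain ⟨n, rfl⟩ := Nat.exists_eq_add_of_le hij
  rw [segment_eq_take_drop, Nat.add_sub_cancel_left, ← drop_drop, append_take_drop]

theorem segment_eq_of_drop_eq {w v : Stream' 𝒜} {u : List 𝒜} {i : ℕ}
    (h : w.drop i = u ++ₛ v) : segment w i (i + u.length) = u := by
  rw [segment_eq_take_drop, h, Nat.add_sub_cancel_left, take_append_of_le_length _ _ _ le_rfl,
    List.take_length]

def cat (P : Language 𝒜) (L : OLang 𝒜) : OLang 𝒜 := Set.image2 appendStream' P L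

theorem cat_add (P Q : Language 𝒜) (L : OLang 𝒜) : cat (P + Q) L = cat P L ∪ cat Q L :=
  Set.image2_union_left

theorem cat_mul (P Q : Language 𝒜) (L : OLang 𝒜) : cat (P * Q) L = cat P (cat Q L) :=
  Set.image2_assoc append_append_stream

theorem cat_eq_union_cat_sub_one (P : Language 𝒜) (L : OLang 𝒜) :
    cat P L = {w ∈ L | [] ∈ P} ∪ cat (P - 1) L := by
  ext w
  constructor
  · rintro ⟨u, hu, v, hv, rfl⟩
    by_cases h : u = []
    · subst h
      exact Or.inl ⟨hv, hu⟩
    · exact Or.inr ⟨u, ⟨hu, h⟩, v, hv, rfl⟩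
  · rintro (⟨hw, h⟩ | ⟨u, hu, v, hv, rfl⟩)
    · exact ⟨[], h, w, hw, rfl⟩
    · exact ⟨u, hu.1, v, hv, rfl⟩

/-- `x k` is what remains of `w` after its first `k` factors. -/
def omegaPow (C : Language 𝒜) : OLang 𝒜 :=
  {w | ∃ x : ℕ → Stream' 𝒜, x 0 = w ∧ ∀ k, ∃ u ∈ C, u ++ₛ x (k + 1) = x k}

theorem memOmegaProd_iff_mem_cat_omegaPow {B C : Language 𝒜} (hC : [] ∉ C) (w : Stream' 𝒜) :
    MemOmegaProd B C w ↔ w ∈ cat B (omegaPow C) := by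
  constructor
  · rintro ⟨idx, hidx, hB, hseg⟩
    have hmono : Monotone idx := monotone_nat_of_le_succ fun k => (hidx k).le
    exact ⟨_, hB, w.drop (idx 0), ⟨fun k => w.drop (idx k), rfl,
      fun k => ⟨_, hseg k, segment_append_drop w (hmono k.le_succ)⟩⟩,
      segment_append_drop w (Nat.zero_le (idx 0))⟩
  · rintro ⟨u, hu, _, ⟨x, rfl, hx⟩, rfl⟩
    choose v hv hvx using hx
    set idx : ℕ → ℕ := fun k => u.length + ∑ j ∈ Finset.range k, (v j).length with hidx
    have hsucc (k : ℕ) : idx (k + 1) = idx k + (v k).length := by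
      simp [hidx, Finset.sum_range_succ, Nat.add_assoc]
    have hdrop (k : ℕ) : (u ++ₛ x 0).drop (idx k) = x k := by
      induction k with
      | zero => simpa [hidx] using drop_append_stream u (x 0)
      | succ k ih => rw [hsucc, ← drop_drop, ih, ← hvx, drop_append_stream]
    refine ⟨idx, fun k => ?_, ?_, fun k => ?_⟩
    · rw [hsucc]
      exact Nat.lt_add_of_pos_right (List.length_pos_iff.2 fun h => hC (h ▸ hv k))
    · rw [show idx 0 = 0 + u.length by simp [hidx], segment_eq_of_drop_eq rfl]
      exact hu
    · rw [hsucc, segment_eq_of_drop_eq ((hdrop k).trans (hvx k).symm)]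
      exact hv k

theorem sInter_prefixed_cat (M N : Language 𝒜) (L : OLang 𝒜) :
    ⋂₀ {A : OLang 𝒜 | cat N L ∪ cat M A ⊆ A} = cat (M∗ * N) L := by
  have hfix : cat N L ∪ cat M (cat (M∗ * N) L) = cat (M∗ * N) L := by
    conv_rhs => rw [← Language.one_add_self_mul_kstar_eq_kstar]
    rw [add_mul, one_mul, cat_add, mul_assoc, cat_mul M]
  refine (Set.sInter_subset_of_mem (S := {A | cat N L ∪ cat M A ⊆ A}) hfix.le).antisymm
    (Set.subset_sInter fun A hA => ?_)
  rintro _ ⟨_, ⟨x, hx, y, hy, rfl⟩, v, hv, rfl⟩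
  obtain ⟨xs, rfl, hxs⟩ := Language.mem_kstar.1 hx
  clear hx
  induction xs with
  | nil => exact hA (Or.inl ⟨y, hy, v, hv, rfl⟩)
  | cons b xs ih =>
    exact hA (Or.inr ⟨b, hxs b List.mem_cons_self, _,
      ih fun z hz => hxs z (List.mem_cons_of_mem b hz),
      ((congrArg (· ++ₛ v) (List.append_assoc b _ y)).trans (append_append_stream b _ v)).symm⟩)

theorem sUnion_postfixed_cat (N : Language 𝒜) :
    ⋃₀ {A : OLang 𝒜 | A ⊆ cat N A} = omegaPow N := by
  refine (Set.sUnion_subset fun A hA => ?_).antisymm (Set.subset_sUnion_of_mem ?_)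
  · intro w hw
    have : Nonempty (Stream' 𝒜) := ⟨w⟩
    have hA : ∀ x ∈ A, ∃ u ∈ N, ∃ v ∈ A, u ++ₛ v = x := hA
    choose! u hu v hv huv using hA
    have hvA (k : ℕ) : v^[k] w ∈ A := by
      induction k with
      | zero => exact hw
      | succ k ih => exact Function.iterate_succ_apply' v k w ▸ hv _ ih
    exact ⟨fun k => v^[k] w, rfl, fun k => ⟨u (v^[k] w), hu _ (hvA k),
      (congrArg (u (v^[k] w) ++ₛ ·) (Function.iterate_succ_apply' v k w)).trans
        (huv _ (hvA k))⟩⟩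
  · rintro _ ⟨x, rfl, hx⟩
    obtain ⟨u, hu, hx0⟩ := hx 0
    exact ⟨u, hu, x 1, ⟨fun k => x (k + 1), rfl, fun k => hx (k + 1)⟩, hx0⟩

end Words

section Paths

variable {σ : Type} (δ : σ → 𝒜 → σ)

/-- The endpoints `p` and `q` of a path need not lie in `S`, only its intermediate states. -/
inductive IsPath (S : Set σ) : σ → List 𝒜 → σ → Prop
  | single (p : σ) (a : 𝒜) : IsPath S p [a] (δ p a)
  | cons {p q : σ} {u : List 𝒜} (a : 𝒜) :
      δ p a ∈ S → IsPath S (δ p a) u q → IsPath S p (a :: u) q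

def pathLang (S : Set σ) (p q : σ) : Language 𝒜 := {u | IsPath δ S p u q}

variable {δ}

theorem IsPath.ne_nil {S : Set σ} {p q : σ} {u : List 𝒜} (h : IsPath δ S p u q) : u ≠ [] := by
  cases h <;> simp

theorem IsPath.mono {S T : Set σ} (hST : S ⊆ T) {p q : σ} {u : List 𝒜}
    (h : IsPath δ S p u q) : IsPath δ T p u q := by
  induction h with
  | single p a => exact .single p a
  | cons a ha _ ih => exact .cons a (hST ha) ih

theorem IsPath.append {S : Set σ} {p r q : σ} {u v : List 𝒜} (hu : IsPath δ S p u r)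
    (hr : r ∈ S) (hv : IsPath δ S r v q) : IsPath δ S p (u ++ v) q := by
  induction hu with
  | single p a => exact .cons a hr hv
  | cons a ha _ ih => exact .cons a ha (ih hr hv)

theorem isPath_empty_iff {p q : σ} {u : List 𝒜} :
    IsPath δ ∅ p u q ↔ ∃ a, δ p a = q ∧ u = [a] := by
  constructor
  · rintro (⟨p, a⟩ | ⟨a, ha, _⟩)
    · exact ⟨a, rfl, rfl⟩
    · exact ha.elim
  · rintro ⟨a, rfl, rfl⟩
    exact .single p a

theorem isPath_univ_iff (M : DFA 𝒜 σ) {p q : σ} {u : List 𝒜} :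
    IsPath M.step Set.univ p u q ↔ u ≠ [] ∧ M.evalFrom p u = q := by
  induction u generalizing p with
  | nil => exact ⟨fun h => absurd rfl h.ne_nil, fun h => absurd rfl h.1⟩
  | cons a u ih =>
    constructor
    · rintro (⟨p, a⟩ | ⟨a, -, h⟩)
      · simp
      · exact ⟨List.cons_ne_nil a u, (ih.1 h).2⟩
    · rintro ⟨-, rfl⟩
      rcases u with _ | ⟨b, u⟩
      · exact .single p a
      · exact .cons a trivial (ih.2 ⟨List.cons_ne_nil b u, rfl⟩)

theorem nil_notMem_pathLang (S : Set σ) (p q : σ) : [] ∉ pathLang δ S p q :=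
  fun h => IsPath.ne_nil h rfl

/-- Split a path at its first intermediate visit to `s`. -/
theorem pathLang_insert (S : Set σ) (s p q : σ) :
    pathLang δ (insert s S) p q
      = pathLang δ S p q + pathLang δ S p s * pathLang δ (insert s S) s q := by
  ext u
  rw [Language.mem_add, Language.mem_mul]
  constructor
  · intro h
    induction h with
    | single p a => exact Or.inl (.single p a)
    | @cons p q u a ha hu ih =>
      rcases ha with ha | ha
      · exact Or.inr ⟨[a], ha ▸ .single p a, u, ha ▸ hu, rfl⟩
      · rcases ih with ih | ⟨x, hx, y, hy, rfl⟩
        · exact Or.inl (.cons a ha ih)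
        · exact Or.inr ⟨a :: x, .cons a ha hx, y, hy, rfl⟩
  · rintro (h | ⟨x, hx, y, hy, rfl⟩)
    · exact h.mono (Set.subset_insert s S)
    · exact (hx.mono (Set.subset_insert s S)).append (Set.mem_insert s S) hy

theorem pathLang_insert_self (S : Set σ) (s q : σ) :
    pathLang δ (insert s S) s q = (pathLang δ S s s)∗ * pathLang δ S s q :=
  (Language.self_eq_mul_add_iff (nil_notMem_pathLang S s s)).1 <| by
    rw [add_comm]
    exact pathLang_insert S s s q

end Paths

namespace Expr

def sum (l : List (Expr 𝒜)) : Expr 𝒜 := l.foldr plus zero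

theorem closedUnder_sum {l : List (Expr 𝒜)} {n : ℕ} (h : ∀ e ∈ l, e.ClosedUnder n) :
    (sum l).ClosedUnder n := by
  induction l with
  | nil => trivial
  | cons e l ih => exact ⟨h e List.mem_cons_self, ih fun g hg => h g (List.mem_cons_of_mem e hg)⟩

theorem guardedIn_sum {l : List (Expr 𝒜)} {U : Set ℕ} (h : ∀ e ∈ l, e.GuardedIn U) :
    (sum l).GuardedIn U := by
  induction l with
  | nil => trivial
  | cons e l ih => exact ⟨h e List.mem_cons_self, ih fun g hg => h g (List.mem_cons_of_mem e hg)⟩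

theorem closedUnder_rename {f : ℕ → ℕ} {n n' : ℕ} (hf : ∀ m < n, f m < n') {e : Expr 𝒜}
    (he : e.ClosedUnder n) : (e.rename f).ClosedUnder n' := by
  induction e generalizing f n n' with
  | var m => exact hf m he
  | letter a e ih => exact ih hf he
  | zero | top => trivial
  | plus e g ihe ihg | inter e g ihe ihg => exact ⟨ihe hf he.1, ihg hf he.2⟩
  | mu e ih | nu e ih =>
    refine ih (n := n + 1) (fun m hm => ?_) he
    cases m with
    | zero => exact Nat.succ_pos n'
    | succ m => exact Nat.succ_lt_succ (hf m (Nat.lt_of_succ_lt_succ hm))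

theorem guardedIn_rename {f : ℕ → ℕ} {U : Set ℕ} {e : Expr 𝒜} (he : e.GuardedIn (f ⁻¹' U)) :
    (e.rename f).GuardedIn U := by
  induction e generalizing f U with
  | var m => exact he
  | letter a e ih => exact ih (U := ∅) he
  | zero | top => trivial
  | plus e g ihe ihg | inter e g ihe ihg => exact ⟨ihe he.1, ihg he.2⟩
  | mu e ih | nu e ih =>
    have hlift : (fun n => match n with | 0 => 0 | m + 1 => f m + 1) ⁻¹' insert 0 ((· + 1) '' U)
        = insert 0 ((· + 1) '' (f ⁻¹' U)) := by
      ext n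
      cases n <;> simp
    exact ih (hlift ▸ he)

end Expr

theorem lang_rename (f : ℕ → ℕ) (ρ : ℕ → OLang 𝒜) (e : Expr 𝒜) :
    lang ρ (e.rename f) = lang (ρ ∘ f) e := by
  induction e generalizing f ρ with
  | mu e ih | nu e ih =>
    have hlift (A : OLang 𝒜) :
        consEnv A ρ ∘ (fun n => match n with | 0 => 0 | m + 1 => f m + 1) = consEnv A (ρ ∘ f) :=
      funext fun n => by cases n <;> rfl
    simp only [Expr.rename, lang, ih, hlift]
  | _ => simp_all [Expr.rename, lang]

theorem mem_lang_sum {ρ : ℕ → OLang 𝒜} {l : List (Expr 𝒜)} {w : Word 𝒜} :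
    w ∈ lang ρ (Expr.sum l) ↔ ∃ e ∈ l, w ∈ lang ρ e := by
  induction l with
  | nil => simp [Expr.sum, lang]
  | cons e l ih => simp [Expr.sum, lang, ← ih]

theorem lang_letter (ρ : ℕ → OLang 𝒜) (a : 𝒜) (e : Expr 𝒜) :
    lang ρ (.letter a e) = cat {[a]} (lang ρ e) := by
  ext w
  constructor
  · rintro ⟨rfl, hw⟩
    exact ⟨[w 0], rfl, wtail w, hw, Stream'.eta w⟩
  · rintro ⟨_, rfl, v, hv, rfl⟩
    exact ⟨rfl, hv⟩

section PathExpr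

variable [Fintype 𝒜] {σ : Type} (δ : σ → 𝒜 → σ)

open Classical in
/-- Denotes `pathLang δ S p q · L(K)`. The loops at the new state `s` become a `μ`, under which
`K` has to be shifted by one binder. -/
noncomputable def pathExpr : List σ → σ → σ → Expr 𝒜 → Expr 𝒜
  | [], p, q, K => Expr.sum ((Finset.univ.filter fun a => δ p a = q).toList.map (.letter · K))
  | s :: S, p, q, K =>
    .plus (pathExpr S p q K)
      (pathExpr S p s (.mu (.plus (pathExpr S s q (K.rename Nat.succ)) (pathExpr S s s (.var 0)))))

theorem lang_pathExpr (S : List σ) (p q : σ) (K : Expr 𝒜) (ρ : ℕ → OLang 𝒜) :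
    lang ρ (pathExpr δ S p q K) = cat (pathLang δ {x | x ∈ S} p q) (lang ρ K) := by
  induction S generalizing p q K ρ with
  | nil =>
    ext w
    rw [pathExpr, mem_lang_sum, show {x : σ | x ∈ []} = ∅ by simp]
    constructor
    · rintro ⟨_, he, hw⟩
      obtain ⟨a, ha, rfl⟩ := List.mem_map.1 he
      obtain ⟨_, rfl, v, hv, rfl⟩ := lang_letter ρ a K ▸ hw
      exact ⟨[a], isPath_empty_iff.2 ⟨a, by simpa using ha, rfl⟩, v, hv, rfl⟩
    · rintro ⟨_, hu, v, hv, rfl⟩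
      obtain ⟨a, rfl, rfl⟩ := isPath_empty_iff.1 hu
      refine ⟨_, List.mem_map.2 ⟨a, by simp, rfl⟩, ?_⟩
      rw [lang_letter]
      exact ⟨[a], rfl, v, hv, rfl⟩
  | cons s S ih =>
    have hS : {x | x ∈ s :: S} = insert s {x | x ∈ S} := by ext; simp
    have hloop : lang ρ (.mu (.plus (pathExpr δ S s q (K.rename Nat.succ))
        (pathExpr δ S s s (.var 0))))
        = cat ((pathLang δ {x | x ∈ S} s s)∗ * pathLang δ {x | x ∈ S} s q) (lang ρ K) := by
      rw [← sInter_prefixed_cat]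
      simp only [lang, ih, lang_rename]
      rfl
    simp only [pathExpr, lang, ih] at hloop ⊢
    rw [hloop, ← pathLang_insert_self, ← cat_mul, ← cat_add, ← pathLang_insert, hS]

theorem closedUnder_pathExpr (S : List σ) (p q : σ) {K : Expr 𝒜} {n : ℕ}
    (hK : K.ClosedUnder n) : (pathExpr δ S p q K).ClosedUnder n := by
  induction S generalizing p q K n with
  | nil =>
    refine Expr.closedUnder_sum fun e he => ?_
    obtain ⟨a, -, rfl⟩ := List.mem_map.1 he
    exact hK
  | cons s S ih =>
    exact ⟨ih p q hK, ih p s ⟨ih s q (Expr.closedUnder_rename (fun m => Nat.succ_lt_succ) hK),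
      ih s s (Nat.succ_pos n)⟩⟩

theorem guardedIn_pathExpr (S : List σ) (p q : σ) {K : Expr 𝒜} (hK : K.Guarded) (U : Set ℕ) :
    (pathExpr δ S p q K).GuardedIn U := by
  induction S generalizing p q K U with
  | nil =>
    refine Expr.guardedIn_sum fun e he => ?_
    obtain ⟨a, -, rfl⟩ := List.mem_map.1 he
    exact hK
  | cons s S ih =>
    exact ⟨ih p q hK U, ih p s (K := .mu (.plus _ _))
      ⟨ih s q (Expr.guardedIn_rename (by rw [Set.preimage_empty]; exact hK)) _,
        ih s s (K := .var 0) (Set.notMem_empty 0) _⟩ U⟩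

end PathExpr

section DFAExpr

variable [Fintype 𝒜] {σ : Type} [Fintype σ]

open Classical in
noncomputable def nonemptyCatExpr (M : DFA 𝒜 σ) (K : Expr 𝒜) : Expr 𝒜 :=
  Expr.sum ((Finset.univ.filter (· ∈ M.accept)).toList.map
    (pathExpr M.step Finset.univ.toList M.start · K))

open Classical in
noncomputable def catExpr (M : DFA 𝒜 σ) (K : Expr 𝒜) : Expr 𝒜 :=
  .plus (if M.start ∈ M.accept then K else .zero) (nonemptyCatExpr M K)

noncomputable def omegaExpr (M : DFA 𝒜 σ) : Expr 𝒜 :=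
  .nu (nonemptyCatExpr M (.var 0))

theorem lang_nonemptyCatExpr (M : DFA 𝒜 σ) (K : Expr 𝒜) (ρ : ℕ → OLang 𝒜) :
    lang ρ (nonemptyCatExpr M K) = cat (M.accepts - 1) (lang ρ K) := by
  classical
  have huniv : {x : σ | x ∈ Finset.univ.toList} = Set.univ := by simp
  ext w
  rw [nonemptyCatExpr, mem_lang_sum]
  constructor
  · rintro ⟨_, he, hw⟩
    obtain ⟨q, hq, rfl⟩ := List.mem_map.1 he
    rw [lang_pathExpr, huniv] at hw
    obtain ⟨u, hu, v, hv, rfl⟩ := hw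
    obtain ⟨hne, rfl⟩ := (isPath_univ_iff M).1 hu
    exact ⟨u, ⟨(Finset.mem_filter.1 (Finset.mem_toList.1 hq)).2, hne⟩, v, hv, rfl⟩
  · rintro ⟨u, ⟨hacc, hne⟩, v, hv, rfl⟩
    refine ⟨_, List.mem_map.2 ⟨M.eval u,
      Finset.mem_toList.2 (Finset.mem_filter.2 ⟨Finset.mem_univ _, hacc⟩), rfl⟩, ?_⟩
    rw [lang_pathExpr, huniv]
    exact ⟨u, (isPath_univ_iff M).2 ⟨hne, rfl⟩, v, hv, rfl⟩

theorem lang_catExpr (M : DFA 𝒜 σ) (K : Expr 𝒜) (ρ : ℕ → OLang 𝒜) :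
    lang ρ (catExpr M K) = cat M.accepts (lang ρ K) := by
  rw [cat_eq_union_cat_sub_one, catExpr, lang, lang_nonemptyCatExpr]
  have hnil : [] ∈ M.accepts ↔ M.start ∈ M.accept := Iff.rfl
  congr 1
  split_ifs with h <;> ext <;> simp [lang, hnil, h]

theorem lang_omegaExpr (M : DFA 𝒜 σ) (ρ : ℕ → OLang 𝒜) :
    lang ρ (omegaExpr M) = omegaPow (M.accepts - 1) := by
  rw [omegaExpr, lang]
  simp only [lang_nonemptyCatExpr]
  exact sUnion_postfixed_cat _

theorem closedUnder_nonemptyCatExpr (M : DFA 𝒜 σ) {K : Expr 𝒜} {n : ℕ}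
    (hK : K.ClosedUnder n) : (nonemptyCatExpr M K).ClosedUnder n :=
  Expr.closedUnder_sum fun _ he => by
    obtain ⟨q, -, rfl⟩ := List.mem_map.1 he
    exact closedUnder_pathExpr _ _ _ _ hK

theorem guardedIn_nonemptyCatExpr (M : DFA 𝒜 σ) {K : Expr 𝒜} (hK : K.Guarded) (U : Set ℕ) :
    (nonemptyCatExpr M K).GuardedIn U :=
  Expr.guardedIn_sum fun _ he => by
    obtain ⟨q, -, rfl⟩ := List.mem_map.1 he
    exact guardedIn_pathExpr _ _ _ _ hK U

theorem closedUnder_catExpr (M : DFA 𝒜 σ) {K : Expr 𝒜} {n : ℕ} (hK : K.ClosedUnder n) :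
    (catExpr M K).ClosedUnder n :=
  ⟨by split_ifs <;> trivial, closedUnder_nonemptyCatExpr M hK⟩

theorem guarded_catExpr (M : DFA 𝒜 σ) {K : Expr 𝒜} (hK : K.Guarded) : (catExpr M K).Guarded :=
  ⟨by split_ifs <;> trivial, guardedIn_nonemptyCatExpr M hK ∅⟩

theorem closed_omegaExpr (M : DFA 𝒜 σ) : (omegaExpr M).Closed :=
  closedUnder_nonemptyCatExpr M (K := .var 0) Nat.zero_lt_one

theorem guarded_omegaExpr (M : DFA 𝒜 σ) : (omegaExpr M).Guarded :=
  guardedIn_nonemptyCatExpr M (K := .var 0) (Set.notMem_empty 0) _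

end DFAExpr

theorem exists_expr_memOmegaProd [Fintype 𝒜] {B C : Language 𝒜} (hB : B.IsRegular)
    (hC : C.IsRegular) (hε : [] ∉ C) :
    ∃ e : Expr 𝒜, e.Closed ∧ e.Guarded ∧ Lang0 e = {w | MemOmegaProd B C w} := by
  obtain ⟨σB, _, MB, rfl⟩ := hB
  obtain ⟨σC, _, MC, rfl⟩ := hC
  refine ⟨catExpr MB (omegaExpr MC), closedUnder_catExpr MB (closed_omegaExpr MC),
    guarded_catExpr MB (guarded_omegaExpr MC), ?_⟩
  have hsub : MC.accepts - 1 = MC.accepts := Set.sdiff_singleton_eq_self hε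
  ext w
  rw [Lang0, lang_catExpr, lang_omegaExpr, hsub]
  exact (memOmegaProd_iff_mem_cat_omegaPow hε w).symm

/-- For every ω-regular language `A ⊆ 𝒜^ω` there exists a closed
guarded RLL expression `e` with `A = L(e)`. -/
theorem omega_regular_denoted_by_guarded_expression {𝒜 : Type} [Fintype 𝒜]
    (A : OLang 𝒜) (hA : IsOmegaRegular A) :
    ∃ e : Expr 𝒜, e.Closed ∧ e.Guarded ∧ Lang0 e = A := by
  obtain ⟨n, B, C, hB, hC, hε, rfl⟩ := hA
  choose e he using fun i => exists_expr_memOmegaProd (hB i) (hC i) (hε i)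
  refine ⟨Expr.sum ((List.finRange n).map e), Expr.closedUnder_sum ?_, Expr.guardedIn_sum ?_, ?_⟩
  · simp only [List.mem_map]
    rintro _ ⟨i, -, rfl⟩
    exact (he i).1
  · simp only [List.mem_map]
    rintro _ ⟨i, -, rfl⟩
    exact (he i).2.1
  · simp only [Lang0] at he
    ext w
    simp [Lang0, mem_lang_sum, he]

end RLL
end

section
/- The Fischer–Ladner closure FL(e) of any RLL expression e is finite; in fact its cardinality is linear in the size of e. -/
namespace RLL
namespace Expr

variable {𝒜 : Type}

lemma rename_congr (e : Expr 𝒜) : ∀ f g : ℕ → ℕ, (∀ n, f n = g n) → rename f e = rename g e := by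
  induction e with
  | var n => intro f g h; simp [rename, h]
  | letter a e ih => intro f g h; simp [rename]; exact ih f g h
  | zero => intros; rfl
  | plus e₁ e₂ ih₁ ih₂ => intro f g h; simp [rename]; exact ⟨ih₁ f g h, ih₂ f g h⟩
  | top => intros; rfl
  | inter e₁ e₂ ih₁ ih₂ => intro f g h; simp [rename]; exact ⟨ih₁ f g h, ih₂ f g h⟩
  | mu e ih =>
      intro f g h; simp [rename]
      exact ih _ _ (fun n => by cases n <;> simp [h _])
  | nu e ih =>
      intro f g h; simp [rename]
      exact ih _ _ (fun n => by cases n <;> simp [h _])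

lemma subst_congr (e : Expr 𝒜) : ∀ σ τ : ℕ → Expr 𝒜, (∀ n, σ n = τ n) → subst σ e = subst τ e := by
  induction e with
  | var n => intro σ τ h; simp [subst, h]
  | letter a e ih => intro σ τ h; simp [subst]; exact ih σ τ h
  | zero => intros; rfl
  | plus e₁ e₂ ih₁ ih₂ => intro σ τ h; simp [subst]; exact ⟨ih₁ σ τ h, ih₂ σ τ h⟩
  | top => intros; rfl
  | inter e₁ e₂ ih₁ ih₂ => intro σ τ h; simp [subst]; exact ⟨ih₁ σ τ h, ih₂ σ τ h⟩
  | mu e ih =>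
      intro σ τ h; simp [subst]
      exact ih _ _ (fun n => by cases n <;> simp [h _])
  | nu e ih =>
      intro σ τ h; simp [subst]
      exact ih _ _ (fun n => by cases n <;> simp [h _])

lemma rename_rename (e : Expr 𝒜) : ∀ f g : ℕ → ℕ,
    rename f (rename g e) = rename (fun n => f (g n)) e := by
  induction e with
  | var n => intros; rfl
  | letter a e ih => intro f g; simp [rename, ih]
  | zero => intros; rfl
  | plus e₁ e₂ ih₁ ih₂ => intro f g; simp [rename, ih₁, ih₂]
  | top => intros; rfl
  | inter e₁ e₂ ih₁ ih₂ => intro f g; simp [rename, ih₁, ih₂]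
  | mu e ih =>
      intro f g; simp [rename, ih]
      exact rename_congr e _ _ (fun n => by cases n <;> simp)
  | nu e ih =>
      intro f g; simp [rename, ih]
      exact rename_congr e _ _ (fun n => by cases n <;> simp)

lemma subst_rename (e : Expr 𝒜) : ∀ (σ : ℕ → Expr 𝒜) (f : ℕ → ℕ),
    subst σ (rename f e) = subst (fun n => σ (f n)) e := by
  induction e with
  | var n => intros; rfl
  | letter a e ih => intro σ f; simp [rename, subst, ih]
  | zero => intros; rfl
  | plus e₁ e₂ ih₁ ih₂ => intro σ f; simp [rename, subst, ih₁, ih₂]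
  | top => intros; rfl
  | inter e₁ e₂ ih₁ ih₂ => intro σ f; simp [rename, subst, ih₁, ih₂]
  | mu e ih =>
      intro σ f; simp [rename, subst, ih]
      exact subst_congr e _ _ (fun n => by cases n <;> simp)
  | nu e ih =>
      intro σ f; simp [rename, subst, ih]
      exact subst_congr e _ _ (fun n => by cases n <;> simp)

lemma rename_subst (e : Expr 𝒜) : ∀ (f : ℕ → ℕ) (σ : ℕ → Expr 𝒜),
    rename f (subst σ e) = subst (fun n => rename f (σ n)) e := by
  induction e with
  | var n => intros; rfl
  | letter a e ih => intro f σ; simp [rename, subst, ih]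
  | zero => intros; rfl
  | plus e₁ e₂ ih₁ ih₂ => intro f σ; simp [rename, subst, ih₁, ih₂]
  | top => intros; rfl
  | inter e₁ e₂ ih₁ ih₂ => intro f σ; simp [rename, subst, ih₁, ih₂]
  | mu e ih =>
      intro f σ; simp [rename, subst, ih]
      exact subst_congr e _ _ (fun n => by cases n <;> simp [rename, rename_rename])
  | nu e ih =>
      intro f σ; simp [rename, subst, ih]
      exact subst_congr e _ _ (fun n => by cases n <;> simp [rename, rename_rename])

lemma subst_subst (e : Expr 𝒜) : ∀ σ τ : ℕ → Expr 𝒜,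
    subst σ (subst τ e) = subst (fun n => subst σ (τ n)) e := by
  induction e with
  | var n => intros; rfl
  | letter a e ih => intro σ τ; simp [subst, ih]
  | zero => intros; rfl
  | plus e₁ e₂ ih₁ ih₂ => intro σ τ; simp [subst, ih₁, ih₂]
  | top => intros; rfl
  | inter e₁ e₂ ih₁ ih₂ => intro σ τ; simp [subst, ih₁, ih₂]
  | mu e ih =>
      intro σ τ; simp [subst, ih]
      exact subst_congr e _ _ (fun n => by
        cases n <;> simp [subst, subst_rename, rename_subst])
  | nu e ih =>
      intro σ τ; simp [subst, ih]
      exact subst_congr e _ _ (fun n => by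
        cases n <;> simp [subst, subst_rename, rename_subst])

lemma subst_id (e : Expr 𝒜) : subst Expr.var e = e := by
  induction e with
  | var n => rfl
  | letter a e ih => simp [subst, ih]
  | zero => rfl
  | plus e₁ e₂ ih₁ ih₂ => simp [subst, ih₁, ih₂]
  | top => rfl
  | inter e₁ e₂ ih₁ ih₂ => simp [subst, ih₁, ih₂]
  | mu e ih =>
      simp [subst]
      rw [subst_congr e _ Expr.var (fun n => by cases n <;> simp [rename]), ih]
  | nu e ih =>
      simp [subst]
      rw [subst_congr e _ Expr.var (fun n => by cases n <;> simp [rename]), ih]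

/-- Key substitution composition lemma for fixed-point unfolding. -/
lemma subst_subst0 (f : Expr 𝒜) (σ : ℕ → Expr 𝒜) (s : Expr 𝒜) :
    subst σ (subst0 s f)
      = subst0 (subst σ s)
          (subst (fun n => match n with | 0 => var 0 | m + 1 => rename Nat.succ (σ m)) f) := by
  simp only [subst0, subst_subst, subst_rename]
  exact subst_congr f _ _ (fun n => by
    cases n with
    | zero => rfl
    | succ m =>
        simp only [subst_rename]
        exact (subst_id (σ m)).symm)

end Expr
end RLL
namespace RLL

variable {𝒜 : Type}

open Expr in
/-- An explicit finite over-approximation of the Fischer–Ladner closure. -/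
def cl [DecidableEq 𝒜] : Expr 𝒜 → Finset (Expr 𝒜)
  | Expr.var n => {Expr.var n}
  | Expr.letter a e => insert (Expr.letter a e) (cl e)
  | Expr.zero => {Expr.zero}
  | Expr.plus e f => insert (Expr.plus e f) (cl e ∪ cl f)
  | Expr.top => {Expr.top}
  | Expr.inter e f => insert (Expr.inter e f) (cl e ∪ cl f)
  | Expr.mu e => insert (Expr.mu e) ((cl e).image (Expr.subst0 (Expr.mu e)))
  | Expr.nu e => insert (Expr.nu e) ((cl e).image (Expr.subst0 (Expr.nu e)))

variable [DecidableEq 𝒜]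

lemma self_mem_cl (e : Expr 𝒜) : e ∈ cl e := by
  cases e <;> simp [cl]

lemma card_cl_le (e : Expr 𝒜) : (cl e).card ≤ e.size := by
  induction e with
  | var n => simp [cl, Expr.size]
  | letter a e ih =>
      simp only [cl, Expr.size]
      calc _ ≤ (cl e).card + 1 := Finset.card_insert_le _ _
        _ ≤ _ := by omega
  | zero => simp [cl, Expr.size]
  | plus e f ih₁ ih₂ =>
      simp only [cl, Expr.size]
      calc _ ≤ (cl e ∪ cl f).card + 1 := Finset.card_insert_le _ _
        _ ≤ (cl e).card + (cl f).card + 1 := by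
            have := Finset.card_union_le (cl e) (cl f); omega
        _ ≤ _ := by omega
  | top => simp [cl, Expr.size]
  | inter e f ih₁ ih₂ =>
      simp only [cl, Expr.size]
      calc _ ≤ (cl e ∪ cl f).card + 1 := Finset.card_insert_le _ _
        _ ≤ (cl e).card + (cl f).card + 1 := by
            have := Finset.card_union_le (cl e) (cl f); omega
        _ ≤ _ := by omega
  | mu e ih =>
      simp only [cl, Expr.size]
      calc _ ≤ ((cl e).image (Expr.subst0 (Expr.mu e))).card + 1 := Finset.card_insert_le _ _
        _ ≤ (cl e).card + 1 := by have := Finset.card_image_le (f := Expr.subst0 (Expr.mu e)) (s := cl e); omega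
        _ ≤ _ := by omega
  | nu e ih =>
      simp only [cl, Expr.size]
      calc _ ≤ ((cl e).image (Expr.subst0 (Expr.nu e))).card + 1 := Finset.card_insert_le _ _
        _ ≤ (cl e).card + 1 := by have := Finset.card_image_le (f := Expr.subst0 (Expr.nu e)) (s := cl e); omega
        _ ≤ _ := by omega

lemma cl_closed (e : Expr 𝒜) : ∀ f g, f ∈ cl e → FLStep f g → g ∈ cl e := by
  induction e with
  | var n =>
      intro f g hf hs
      simp [cl] at hf; subst hf; cases hs
  | zero =>
      intro f g hf hs
      simp [cl] at hf; subst hf; cases hs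
  | top =>
      intro f g hf hs
      simp [cl] at hf; subst hf; cases hs
  | letter a e ih =>
      intro f g hf hs
      simp only [cl, Finset.mem_insert] at hf
      rcases hf with rfl | hf
      · cases hs; exact Finset.mem_insert_of_mem (self_mem_cl e)
      · exact Finset.mem_insert_of_mem (ih f g hf hs)
  | plus e₁ e₂ ih₁ ih₂ =>
      intro f g hf hs
      simp only [cl, Finset.mem_insert, Finset.mem_union] at hf ⊢
      rcases hf with rfl | hf | hf
      · cases hs
        · exact Or.inr (Or.inl (self_mem_cl e₁))
        · exact Or.inr (Or.inr (self_mem_cl e₂))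
      · exact Or.inr (Or.inl (ih₁ f g hf hs))
      · exact Or.inr (Or.inr (ih₂ f g hf hs))
  | inter e₁ e₂ ih₁ ih₂ =>
      intro f g hf hs
      simp only [cl, Finset.mem_insert, Finset.mem_union] at hf ⊢
      rcases hf with rfl | hf | hf
      · cases hs
        · exact Or.inr (Or.inl (self_mem_cl e₁))
        · exact Or.inr (Or.inr (self_mem_cl e₂))
      · exact Or.inr (Or.inl (ih₁ f g hf hs))
      · exact Or.inr (Or.inr (ih₂ f g hf hs))
  | mu e ih =>
      intro f g hf hs
      simp only [cl, Finset.mem_insert, Finset.mem_image] at hf ⊢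
      rcases hf with rfl | ⟨f', hf', rfl⟩
      · cases hs
        exact Or.inr ⟨e, self_mem_cl e, rfl⟩
      · cases f' with
        | var n =>
            cases n with
            | zero =>
                -- subst0 (mu e) (var 0) = mu e
                simp only [Expr.subst0, Expr.subst] at hs ⊢
                cases hs
                exact Or.inr ⟨e, self_mem_cl e, rfl⟩
            | succ m =>
                simp only [Expr.subst0, Expr.subst] at hs
                cases hs
        | zero => simp only [Expr.subst0, Expr.subst] at hs; cases hs
        | top => simp only [Expr.subst0, Expr.subst] at hs; cases hs
        | letter a h =>
            simp only [Expr.subst0, Expr.subst] at hs ⊢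
            cases hs
            exact Or.inr ⟨h, ih _ h hf' (FLStep.letter a h), rfl⟩
        | plus h k =>
            simp only [Expr.subst0, Expr.subst] at hs ⊢
            cases hs
            · exact Or.inr ⟨h, ih _ h hf' (FLStep.plusL h k), rfl⟩
            · exact Or.inr ⟨k, ih _ k hf' (FLStep.plusR h k), rfl⟩
        | inter h k =>
            simp only [Expr.subst0, Expr.subst] at hs ⊢
            cases hs
            · exact Or.inr ⟨h, ih _ h hf' (FLStep.interL h k), rfl⟩
            · exact Or.inr ⟨k, ih _ k hf' (FLStep.interR h k), rfl⟩
        | mu m =>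
            simp only [Expr.subst0, Expr.subst] at hs ⊢
            cases hs
            refine Or.inr ⟨Expr.subst0 (Expr.mu m) m, ih _ _ hf' (FLStep.mu m), ?_⟩
            exact Expr.subst_subst0 m _ (Expr.mu m)
        | nu m =>
            simp only [Expr.subst0, Expr.subst] at hs ⊢
            cases hs
            refine Or.inr ⟨Expr.subst0 (Expr.nu m) m, ih _ _ hf' (FLStep.nu m), ?_⟩
            exact Expr.subst_subst0 m _ (Expr.nu m)
  | nu e ih =>
      intro f g hf hs
      simp only [cl, Finset.mem_insert, Finset.mem_image] at hf ⊢
      rcases hf with rfl | ⟨f', hf', rfl⟩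
      · cases hs
        exact Or.inr ⟨e, self_mem_cl e, rfl⟩
      · cases f' with
        | var n =>
            cases n with
            | zero =>
                simp only [Expr.subst0, Expr.subst] at hs ⊢
                cases hs
                exact Or.inr ⟨e, self_mem_cl e, rfl⟩
            | succ m =>
                simp only [Expr.subst0, Expr.subst] at hs
                cases hs
        | zero => simp only [Expr.subst0, Expr.subst] at hs; cases hs
        | top => simp only [Expr.subst0, Expr.subst] at hs; cases hs
        | letter a h =>
            simp only [Expr.subst0, Expr.subst] at hs ⊢
            cases hs
            exact Or.inr ⟨h, ih _ h hf' (FLStep.letter a h), rfl⟩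
        | plus h k =>
            simp only [Expr.subst0, Expr.subst] at hs ⊢
            cases hs
            · exact Or.inr ⟨h, ih _ h hf' (FLStep.plusL h k), rfl⟩
            · exact Or.inr ⟨k, ih _ k hf' (FLStep.plusR h k), rfl⟩
        | inter h k =>
            simp only [Expr.subst0, Expr.subst] at hs ⊢
            cases hs
            · exact Or.inr ⟨h, ih _ h hf' (FLStep.interL h k), rfl⟩
            · exact Or.inr ⟨k, ih _ k hf' (FLStep.interR h k), rfl⟩
        | mu m =>
            simp only [Expr.subst0, Expr.subst] at hs ⊢
            cases hs
            refine Or.inr ⟨Expr.subst0 (Expr.mu m) m, ih _ _ hf' (FLStep.mu m), ?_⟩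
            exact Expr.subst_subst0 m _ (Expr.mu m)
        | nu m =>
            simp only [Expr.subst0, Expr.subst] at hs ⊢
            cases hs
            refine Or.inr ⟨Expr.subst0 (Expr.nu m) m, ih _ _ hf' (FLStep.nu m), ?_⟩
            exact Expr.subst_subst0 m _ (Expr.nu m)

lemma FL_subset_cl (e : Expr 𝒜) : FL e ⊆ ↑(cl e) := by
  intro f hf
  induction hf with
  | refl => exact self_mem_cl e
  | tail _ hstep ih => exact cl_closed e _ _ ih hstep

end RLL
namespace RLL

/-- The Fischer–Ladner closure `FL(e)` of any RLL expression `e` is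
finite; in fact its cardinality is linear in (indeed, at most) the size of `e`. -/
theorem fl_closure_finite {𝒜 : Type} [Fintype 𝒜] (e : Expr 𝒜) :
    (FL e).Finite ∧ (FL e).ncard ≤ e.size := by
  classical
  have hsub : FL e ⊆ ↑(cl e) := FL_subset_cl e
  refine ⟨Set.Finite.subset (cl e).finite_toSet hsub, ?_⟩
  calc (FL e).ncard ≤ (↑(cl e) : Set (Expr 𝒜)).ncard :=
        Set.ncard_le_ncard hsub (cl e).finite_toSet
    _ = (cl e).card := Set.ncard_coe_finset _
    _ ≤ e.size := card_cl_le e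

end RLL
end

section
/- The relation ≤_FL on RLL expressions is a preorder, and the strict relation <_FL (where e <_FL f iff e ≤_FL f and f ≰_FL e) is well-founded. -/
namespace RLL

section Aux

variable {𝒜 : Type}

open Expr

/-- Lift a renaming under a binder. -/
def upr (f : ℕ → ℕ) : ℕ → ℕ := fun n => match n with | 0 => 0 | m + 1 => f m + 1

/-- Lift a substitution under a binder. -/
def ups (σ : ℕ → Expr 𝒜) : ℕ → Expr 𝒜 :=
  fun n => match n with | 0 => var 0 | m + 1 => rename Nat.succ (σ m)

lemma rename_def (f : ℕ → ℕ) (e : Expr 𝒜) :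
    rename f e = match e with
      | var n => var (f n)
      | letter a e => letter a (rename f e)
      | zero => zero
      | plus e g => plus (rename f e) (rename f g)
      | top => top
      | inter e g => inter (rename f e) (rename f g)
      | mu e => mu (rename (upr f) e)
      | nu e => nu (rename (upr f) e) := by
  cases e <;> rfl

lemma subst_def (σ : ℕ → Expr 𝒜) (e : Expr 𝒜) :
    subst σ e = match e with
      | var n => σ n
      | letter a e => letter a (subst σ e)
      | zero => zero
      | plus e g => plus (subst σ e) (subst σ g)
      | top => top
      | inter e g => inter (subst σ e) (subst σ g)
      | mu e => mu (subst (ups σ) e)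
      | nu e => nu (subst (ups σ) e) := by
  cases e <;> rfl

lemma rename_rename (f g : ℕ → ℕ) (e : Expr 𝒜) :
    rename f (rename g e) = rename (fun n => f (g n)) e := by
  induction e generalizing f g with
  | var n => rfl
  | letter a e ih => simp [rename, ih]
  | zero => rfl
  | plus e₁ e₂ ih₁ ih₂ => simp [rename, ih₁, ih₂]
  | top => rfl
  | inter e₁ e₂ ih₁ ih₂ => simp [rename, ih₁, ih₂]
  | mu e ih =>
      have h : (fun n => upr f (upr g n)) = upr (fun n => f (g n)) := by
        funext n; cases n <;> rfl
      show mu (rename (upr f) (rename (upr g) e)) = mu (rename (upr fun n => f (g n)) e)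
      rw [ih, h]
  | nu e ih =>
      have h : (fun n => upr f (upr g n)) = upr (fun n => f (g n)) := by
        funext n; cases n <;> rfl
      show nu (rename (upr f) (rename (upr g) e)) = nu (rename (upr fun n => f (g n)) e)
      rw [ih, h]

lemma subst_rename (σ : ℕ → Expr 𝒜) (f : ℕ → ℕ) (e : Expr 𝒜) :
    subst σ (rename f e) = subst (fun n => σ (f n)) e := by
  induction e generalizing σ f with
  | var n => rfl
  | letter a e ih => simp [rename, subst, ih]
  | zero => rfl
  | plus e₁ e₂ ih₁ ih₂ => simp [rename, subst, ih₁, ih₂]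
  | top => rfl
  | inter e₁ e₂ ih₁ ih₂ => simp [rename, subst, ih₁, ih₂]
  | mu e ih =>
      have h : (fun n => ups σ (upr f n)) = ups (fun n => σ (f n)) := by
        funext n; cases n <;> rfl
      show mu (subst (ups σ) (rename (upr f) e)) = mu (subst (ups fun n => σ (f n)) e)
      rw [ih, h]
  | nu e ih =>
      have h : (fun n => ups σ (upr f n)) = ups (fun n => σ (f n)) := by
        funext n; cases n <;> rfl
      show nu (subst (ups σ) (rename (upr f) e)) = nu (subst (ups fun n => σ (f n)) e)
      rw [ih, h]

lemma rename_subst (f : ℕ → ℕ) (σ : ℕ → Expr 𝒜) (e : Expr 𝒜) :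
    rename f (subst σ e) = subst (fun n => rename f (σ n)) e := by
  induction e generalizing σ f with
  | var n => rfl
  | letter a e ih => simp [rename, subst, ih]
  | zero => rfl
  | plus e₁ e₂ ih₁ ih₂ => simp [rename, subst, ih₁, ih₂]
  | top => rfl
  | inter e₁ e₂ ih₁ ih₂ => simp [rename, subst, ih₁, ih₂]
  | mu e ih =>
      have h : (fun n => rename (upr f) (ups σ n)) = ups (fun n => rename f (σ n)) := by
        funext n
        cases n with
        | zero => rfl
        | succ m =>
            show rename (upr f) (rename Nat.succ (σ m)) = rename Nat.succ (rename f (σ m))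
            rw [rename_rename, rename_rename]
            rfl
      show mu (rename (upr f) (subst (ups σ) e)) = mu (subst (ups fun n => rename f (σ n)) e)
      rw [ih, h]
  | nu e ih =>
      have h : (fun n => rename (upr f) (ups σ n)) = ups (fun n => rename f (σ n)) := by
        funext n
        cases n with
        | zero => rfl
        | succ m =>
            show rename (upr f) (rename Nat.succ (σ m)) = rename Nat.succ (rename f (σ m))
            rw [rename_rename, rename_rename]
            rfl
      show nu (rename (upr f) (subst (ups σ) e)) = nu (subst (ups fun n => rename f (σ n)) e)
      rw [ih, h]

lemma ups_comp (σ τ : ℕ → Expr 𝒜) :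
    (fun n => subst (ups σ) (ups τ n)) = ups (fun n => subst σ (τ n)) := by
  funext n
  cases n with
  | zero => rfl
  | succ m =>
      show subst (ups σ) (rename Nat.succ (τ m)) = rename Nat.succ (subst σ (τ m))
      rw [subst_rename, rename_subst]
      rfl

lemma subst_subst (σ τ : ℕ → Expr 𝒜) (e : Expr 𝒜) :
    subst σ (subst τ e) = subst (fun n => subst σ (τ n)) e := by
  induction e generalizing σ τ with
  | var n => rfl
  | letter a e ih => simp [subst, ih]
  | zero => rfl
  | plus e₁ e₂ ih₁ ih₂ => simp [subst, ih₁, ih₂]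
  | top => rfl
  | inter e₁ e₂ ih₁ ih₂ => simp [subst, ih₁, ih₂]
  | mu e ih =>
      show mu (subst (ups σ) (subst (ups τ) e)) = mu (subst (ups fun n => subst σ (τ n)) e)
      rw [ih, ups_comp]
  | nu e ih =>
      show nu (subst (ups σ) (subst (ups τ) e)) = nu (subst (ups fun n => subst σ (τ n)) e)
      rw [ih, ups_comp]

lemma subst_id (e : Expr 𝒜) : subst var e = e := by
  induction e with
  | var n => rfl
  | letter a e ih => simp [subst, ih]
  | zero => rfl
  | plus e₁ e₂ ih₁ ih₂ => simp [subst, ih₁, ih₂]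
  | top => rfl
  | inter e₁ e₂ ih₁ ih₂ => simp [subst, ih₁, ih₂]
  | mu e ih =>
      show mu (subst (ups var) e) = mu e
      have h : ups (var : ℕ → Expr 𝒜) = var := by
        funext n; cases n <;> rfl
      rw [h, ih]
  | nu e ih =>
      show nu (subst (ups var) e) = nu e
      have h : ups (var : ℕ → Expr 𝒜) = var := by
        funext n; cases n <;> rfl
      rw [h, ih]

/-- The substitution implementing `subst0`. -/
def sub0 (t : Expr 𝒜) : ℕ → Expr 𝒜 := fun n => match n with | 0 => t | m + 1 => var m

lemma subst0_eq (t e : Expr 𝒜) : subst0 t e = subst (sub0 t) e := rfl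

/-- Key composition law: substituting into an unfolding. -/
lemma subst_subst0 (σ : ℕ → Expr 𝒜) (t e : Expr 𝒜) :
    subst σ (subst0 t e) = subst0 (subst σ t) (subst (ups σ) e) := by
  rw [subst0_eq, subst0_eq, subst_subst, subst_subst]
  congr 1
  funext n
  cases n with
  | zero => rfl
  | succ m =>
      show σ m = subst (sub0 (subst σ t)) (rename Nat.succ (σ m))
      rw [subst_rename]
      have h : (fun n => sub0 (subst σ t) (Nat.succ n)) = (var : ℕ → Expr 𝒜) := by
        funext k; rfl
      rw [h, subst_id]

lemma subst0_mu (s g : Expr 𝒜) :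
    subst0 s (Expr.mu g) = Expr.mu (subst (ups (sub0 s)) g) := rfl

lemma subst0_nu (s g : Expr 𝒜) :
    subst0 s (Expr.nu g) = Expr.nu (subst (ups (sub0 s)) g) := rfl

lemma unfold_mu (s g : Expr 𝒜) :
    subst0 (subst0 s (Expr.mu g)) (subst (ups (sub0 s)) g)
      = subst0 s (subst0 (Expr.mu g) g) :=
  (subst_subst0 (sub0 s) (Expr.mu g) g).symm

lemma unfold_nu (s g : Expr 𝒜) :
    subst0 (subst0 s (Expr.nu g)) (subst (ups (sub0 s)) g)
      = subst0 s (subst0 (Expr.nu g) g) :=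
  (subst_subst0 (sub0 s) (Expr.nu g) g).symm

variable [DecidableEq 𝒜]

/-- A finite overapproximation of the Fischer–Ladner closure. -/
def Cl : Expr 𝒜 → Finset (Expr 𝒜)
  | var n => {var n}
  | letter a e => insert (letter a e) (Cl e)
  | zero => {zero}
  | plus e f => insert (plus e f) (Cl e ∪ Cl f)
  | top => {top}
  | inter e f => insert (inter e f) (Cl e ∪ Cl f)
  | mu e => insert (mu e) ((Cl e).image (subst0 (mu e)))
  | nu e => insert (nu e) ((Cl e).image (subst0 (nu e)))

lemma self_mem_Cl (e : Expr 𝒜) : e ∈ Cl e := by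
  cases e <;> simp [Cl]

/-- Steps from a substituted element of an FL-step-closed set stay in the image. -/
lemma step_subst0 {e : Expr 𝒜} (s : Expr 𝒜)
    (hK : ∀ x ∈ Cl e, ∀ y, FLStep x y → y ∈ Cl e)
    (hs : s = Expr.mu e ∨ s = Expr.nu e) :
    ∀ g ∈ Cl e, ∀ y, FLStep (subst0 s g) y → y ∈ (Cl e).image (subst0 s) := by
  intro g hg y hy
  cases g with
  | var n =>
      cases n with
      | zero =>
          have hx : subst0 s (var 0) = s := rfl
          rw [hx] at hy
          rcases hs with rfl | rfl
          · cases hy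
            exact Finset.mem_image_of_mem _ (self_mem_Cl e)
          · cases hy
            exact Finset.mem_image_of_mem _ (self_mem_Cl e)
      | succ m =>
          have hx : subst0 s (var (m + 1)) = var m := rfl
          rw [hx] at hy
          cases hy
  | letter a g' =>
      have hx : subst0 s (letter a g') = letter a (subst0 s g') := rfl
      rw [hx] at hy
      cases hy
      exact Finset.mem_image_of_mem _ (hK _ hg _ (FLStep.letter a g'))
  | zero => cases hy
  | top =>
      have hx : subst0 s (top : Expr 𝒜) = top := rfl
      rw [hx] at hy
      cases hy
  | plus g₁ g₂ =>
      have hx : subst0 s (plus g₁ g₂) = plus (subst0 s g₁) (subst0 s g₂) := rfl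
      rw [hx] at hy
      cases hy with
      | plusL => exact Finset.mem_image_of_mem _ (hK _ hg _ (FLStep.plusL g₁ g₂))
      | plusR => exact Finset.mem_image_of_mem _ (hK _ hg _ (FLStep.plusR g₁ g₂))
  | inter g₁ g₂ =>
      have hx : subst0 s (inter g₁ g₂) = inter (subst0 s g₁) (subst0 s g₂) := rfl
      rw [hx] at hy
      cases hy with
      | interL => exact Finset.mem_image_of_mem _ (hK _ hg _ (FLStep.interL g₁ g₂))
      | interR => exact Finset.mem_image_of_mem _ (hK _ hg _ (FLStep.interR g₁ g₂))
  | mu g' =>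
      rw [subst0_mu] at hy
      cases hy
      rw [← subst0_mu, unfold_mu]
      exact Finset.mem_image_of_mem _ (hK _ hg _ (FLStep.mu g'))
  | nu g' =>
      rw [subst0_nu] at hy
      cases hy
      rw [← subst0_nu, unfold_nu]
      exact Finset.mem_image_of_mem _ (hK _ hg _ (FLStep.nu g'))

lemma Cl_step_closed (e : Expr 𝒜) :
    ∀ x ∈ Cl e, ∀ y, FLStep x y → y ∈ Cl e := by
  induction e with
  | var n =>
      intro x hx y hy
      simp [Cl] at hx
      subst hx; cases hy
  | letter a e ih =>
      intro x hx y hy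
      simp [Cl] at hx
      rcases hx with rfl | hx
      · cases hy; exact Finset.mem_insert_of_mem (self_mem_Cl e)
      · exact Finset.mem_insert_of_mem (ih _ hx _ hy)
  | zero =>
      intro x hx y hy
      simp [Cl] at hx
      subst hx; cases hy
  | top =>
      intro x hx y hy
      simp [Cl] at hx
      subst hx; cases hy
  | plus e₁ e₂ ih₁ ih₂ =>
      intro x hx y hy
      simp [Cl] at hx
      rcases hx with rfl | hx | hx
      · cases hy with
        | plusL => exact Finset.mem_insert_of_mem (Finset.mem_union_left _ (self_mem_Cl e₁))
        | plusR => exact Finset.mem_insert_of_mem (Finset.mem_union_right _ (self_mem_Cl e₂))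
      · exact Finset.mem_insert_of_mem (Finset.mem_union_left _ (ih₁ _ hx _ hy))
      · exact Finset.mem_insert_of_mem (Finset.mem_union_right _ (ih₂ _ hx _ hy))
  | inter e₁ e₂ ih₁ ih₂ =>
      intro x hx y hy
      simp [Cl] at hx
      rcases hx with rfl | hx | hx
      · cases hy with
        | interL => exact Finset.mem_insert_of_mem (Finset.mem_union_left _ (self_mem_Cl e₁))
        | interR => exact Finset.mem_insert_of_mem (Finset.mem_union_right _ (self_mem_Cl e₂))
      · exact Finset.mem_insert_of_mem (Finset.mem_union_left _ (ih₁ _ hx _ hy))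
      · exact Finset.mem_insert_of_mem (Finset.mem_union_right _ (ih₂ _ hx _ hy))
  | mu e ih =>
      intro x hx y hy
      simp [Cl] at hx
      rcases hx with rfl | ⟨g, hg, rfl⟩
      · cases hy
        exact Finset.mem_insert_of_mem (Finset.mem_image_of_mem _ (self_mem_Cl e))
      · exact Finset.mem_insert_of_mem
          (step_subst0 (mu e) ih (Or.inl rfl) g hg y hy)
  | nu e ih =>
      intro x hx y hy
      simp [Cl] at hx
      rcases hx with rfl | ⟨g, hg, rfl⟩
      · cases hy
        exact Finset.mem_insert_of_mem (Finset.mem_image_of_mem _ (self_mem_Cl e))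
      · exact Finset.mem_insert_of_mem
          (step_subst0 (nu e) ih (Or.inr rfl) g hg y hy)

lemma flle_mem_Cl {e f : Expr 𝒜} (h : FLle f e) : f ∈ Cl e := by
  induction h with
  | refl => exact self_mem_Cl e
  | tail hab hbc ih => exact Cl_step_closed e _ ih _ hbc

end Aux

/-- The relation `≤_FL` is a preorder (reflexive and transitive), and
the strict relation `<_FL` (where `f <_FL e` iff `f ≤_FL e` and `e ≰_FL f`) is
well-founded. -/
theorem flle_preorder_fllt_wellFounded {𝒜 : Type} [Fintype 𝒜] :
    Reflexive (FLle (𝒜 := 𝒜)) ∧ Transitive (FLle (𝒜 := 𝒜)) ∧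
      WellFounded (FLlt (𝒜 := 𝒜)) := by
  classical
  refine ⟨fun e => Relation.ReflTransGen.refl,
    fun _ _ _ hxy hyz => Relation.ReflTransGen.trans hyz hxy, ?_⟩
  have hfin : ∀ e : Expr 𝒜, {f | FLle f e}.Finite := fun e =>
    (Cl e).finite_toSet.subset (fun f hf => flle_mem_Cl hf)
  have key : ∀ f e : Expr 𝒜, FLlt f e →
      {g | FLle g f}.ncard < {g | FLle g e}.ncard := by
    rintro f e ⟨hfe, hef⟩
    refine Set.ncard_lt_ncard ?_ (hfin e)
    rw [Set.ssubset_def]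
    constructor
    · intro g hg
      exact Relation.ReflTransGen.trans hfe hg
    · intro h
      exact hef (h (Relation.ReflTransGen.refl : FLle e e))
  exact Subrelation.wf (fun {f e} h => key f e h)
    (InvImage.wf (fun e : Expr 𝒜 => {g | FLle g e}.ncard) Nat.lt_wfRel.wf)

end RLL
end
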